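/- Let (p_i)_{i∈ℕ} be a monotonically decreasing sequence of reals with 0 < p_i < 1 for all i, which is summable with Σ := ∑_{i=1}^{∞} p_i < 1. Then for every n ∈ ℕ and every nonempty subset A ⊆ {1,…,n}: ∑_{i∈A} p_i · ∏_{j∈{1,…,n}, j≠i} (1 − p_j) ≥ |A| · p_n · (1 − Σ). -/

import Mathlib

open Finset

/-! Each summand is at least `p n (1 - Σ)`: `p i ≥ p n` by monotonicity, and the Weierstrass
product inequality gives `∏ j ≠ i, (1 - p j) ≥ 1 - ∑ j ≠ i, p j ≥ 1 - Σ`. -/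

theorem Finset.one_sub_sum_le_prod_one_sub {ι R : Type*} [CommRing R] [PartialOrder R]
    [IsOrderedRing R] (s : Finset ι) {f : ι → R} (h0 : ∀ i ∈ s, 0 ≤ f i)
    (h1 : ∀ i ∈ s, f i ≤ 1) : 1 - ∑ i ∈ s, f i ≤ ∏ i ∈ s, (1 - f i) := by
  induction s using Finset.cons_induction with
  | empty => simp
  | cons a s ha ih =>
    rw [sum_cons, prod_cons]
    have ih := ih (fun i hi => h0 i (mem_cons_of_mem hi)) (fun i hi => h1 i (mem_cons_of_mem hi))
    have hfa : 0 ≤ f a := h0 a (mem_cons_self a s)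
    have hS : 0 ≤ ∑ i ∈ s, f i := sum_nonneg fun i hi => h0 i (mem_cons_of_mem hi)
    calc 1 - (f a + ∑ i ∈ s, f i)
        ≤ (1 - f a) * (1 - ∑ i ∈ s, f i) := by
          linear_combination mul_nonneg hfa hS
      _ ≤ (1 - f a) * ∏ i ∈ s, (1 - f i) :=
          mul_le_mul_of_nonneg_left ih (sub_nonneg.2 (h1 a (mem_cons_self a s)))

theorem Finset.sum_le_tsum_succ {α : Type*} [AddCommMonoid α] [PartialOrder α]
    [IsOrderedAddMonoid α] [TopologicalSpace α] [OrderClosedTopology α] {f : ℕ → α}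
    {s : Finset ℕ} (hs : 0 ∉ s) (hf : ∀ i, 0 ≤ f (i + 1))
    (hsum : Summable fun i => f (i + 1)) : ∑ j ∈ s, f j ≤ ∑' i, f (i + 1) := by
  have hs' : ∀ x ∈ s, x ∉ Set.range Nat.succ → f x = 0 := fun x hx hx0 => by
    simp only [Nat.range_succ, Set.mem_ofPred_eq, not_lt, Nat.le_zero] at hx0
    exact absurd (hx0 ▸ hx) hs
  rw [← sum_preimage Nat.succ s Nat.succ_injective.injOn f hs']
  exact hsum.sum_le_tsum _ fun i _ => hf i

theorem one_sub_tsum_le_prod_one_sub {p : ℕ → ℝ} (hp : ∀ i : ℕ, 1 ≤ i → 0 < p i ∧ p i < 1)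
    (hsum : Summable fun i : ℕ => p (i + 1)) {s : Finset ℕ} (hs : 0 ∉ s) :
    1 - ∑' j : ℕ, p (j + 1) ≤ ∏ j ∈ s, (1 - p j) := by
  have hmem : ∀ j ∈ s, 0 < p j ∧ p j < 1 := fun j hj =>
    hp j (Nat.one_le_iff_ne_zero.2 (ne_of_mem_of_not_mem hj hs))
  calc 1 - ∑' j : ℕ, p (j + 1)
      ≤ 1 - ∑ j ∈ s, p j := by
        gcongr
        exact sum_le_tsum_succ hs (fun j => (hp (j + 1) (Nat.le_add_left 1 j)).1.le) hsum
    _ ≤ ∏ j ∈ s, (1 - p j) :=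
        one_sub_sum_le_prod_one_sub s (fun j hj => (hmem j hj).1.le) fun j hj => (hmem j hj).2.le

theorem stmt13_general (p : ℕ → ℝ)
    (hp : ∀ i : ℕ, 1 ≤ i → 0 < p i ∧ p i < 1)
    (hmono : ∀ i : ℕ, 1 ≤ i → p (i + 1) ≤ p i)
    (hsum : Summable (fun i : ℕ => p (i + 1))) :
    ∀ n : ℕ, 1 ≤ n → ∀ A : Finset ℕ, A ⊆ Finset.Icc 1 n → A.Nonempty →
      (A.card : ℝ) * p n * (1 - ∑' i : ℕ, p (i + 1)) ≤
        ∑ i ∈ A, p i * ∏ j ∈ (Finset.Icc 1 n).erase i, (1 - p j) := by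
  intro n hn A hA _
  have hanti : AntitoneOn p {i | 1 ≤ i} := antitoneOn_nat_Ici_of_succ_le hmono
  rw [mul_assoc, ← nsmul_eq_mul, ← sum_const]
  refine sum_le_sum fun i hi => ?_
  obtain ⟨hi1, hin⟩ := mem_Icc.1 (hA hi)
  have hprod : 0 ≤ ∏ j ∈ (Icc 1 n).erase i, (1 - p j) :=
    prod_nonneg fun j hj => sub_nonneg.2 (hp j (mem_Icc.1 (mem_of_mem_erase hj)).1).2.le
  calc p n * (1 - ∑' j : ℕ, p (j + 1))
      ≤ p n * ∏ j ∈ (Icc 1 n).erase i, (1 - p j) :=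
        mul_le_mul_of_nonneg_left (one_sub_tsum_le_prod_one_sub hp hsum (by simp)) (hp n hn).1.le
    _ ≤ p i * ∏ j ∈ (Icc 1 n).erase i, (1 - p j) :=
        mul_le_mul_of_nonneg_right (hanti hi1 (le_trans hi1 hin) hin) hprod

/-- Probability bound behind Theorem 4.5: for a monotonically decreasing summable
sequence of mutation probabilities with `Σ = ∑_{i=1}^∞ p_i < 1`, for every `n ≥ 1`
and every nonempty `A ⊆ {1,…,n}`, the probability that exactly one bit, at a
position in `A`, flips is at least `|A|·p_n·(1 − Σ)`. -/
theorem stmt13 (p : ℕ → ℝ)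
    (hp : ∀ i : ℕ, 1 ≤ i → 0 < p i ∧ p i < 1)
    (hmono : ∀ i : ℕ, 1 ≤ i → p (i + 1) ≤ p i)
    (hsum : Summable (fun i : ℕ => p (i + 1)))
    (hSigma : (∑' i : ℕ, p (i + 1)) < 1) :
    ∀ n : ℕ, 1 ≤ n → ∀ A : Finset ℕ, A ⊆ Finset.Icc 1 n → A.Nonempty →
      (A.card : ℝ) * p n * (1 - ∑' i : ℕ, p (i + 1)) ≤
        ∑ i ∈ A, p i * ∏ j ∈ (Finset.Icc 1 n).erase i, (1 - p j) :=
  stmt13_general p hp hmono hsum
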